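/- If C₊(τ̄, τ) ≠ 0 then τ̄ ≤ τ, where ≤ is the relation obtained by replacing leaves of τ̄ labeled 𝟏 by arbitrary trees and leaves labeled X_i by arbitrary trees other than 𝟏 or X_j (j ≠ i). -/

import Mathlib

/-- Trees built from generators `𝟏`, `X i`, `Ξ` by the ternary product
`τ₁,τ₂,τ₃ ↦ I(τ₁)I(τ₂)I(τ₃)`. -/
inductive T (d : ℕ) : Type
  | one : T d
  | X : Fin d → T d
  | Xi : T d
  | prod : T d → T d → T d → T d
deriving DecidableEq

namespace T

variable {d : ℕ}

/-- The order of a tree, with parameter `δ`. -/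
noncomputable def order (δ : ℝ) : T d → ℝ
  | one => -2
  | X _ => -1
  | Xi => -3 + δ
  | prod a b c => 6 + order δ a + order δ b + order δ c

/-- Number of `𝟏`-leaves. -/
def mOne : T d → ℕ
  | one => 1
  | X _ => 0
  | Xi => 0
  | prod a b c => mOne a + mOne b + mOne c

/-- Total number of `X i`-leaves. -/
def mX : T d → ℕ
  | one => 0
  | X _ => 1
  | Xi => 0
  | prod a b c => mX a + mX b + mX c

/-- Number of noise leaves `Ξ`. -/
def mXi : T d → ℕ
  | one => 0
  | X _ => 0
  | Xi => 1
  | prod a b c => mXi a + mXi b + mXi c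

end T

namespace T
/-- Whether a tree is a ternary product (i.e. not a generator). -/
def isProd {d : ℕ} : T d → Bool
  | prod _ _ _ => true
  | _ => false

/-- Membership in `Ñ`: ternary-product trees of order in `(-1, 0)`. -/
def inTildeN {d : ℕ} (δ : ℝ) (τ : T d) : Prop :=
  isProd τ = true ∧ -1 < order δ τ ∧ order δ τ < 0

noncomputable instance {d : ℕ} (δ : ℝ) (τ : T d) : Decidable (inTildeN δ τ) := by
  unfold inTildeN; infer_instance
end T

/-- Planted trees: `I(τ)` and the derivative-planted trees `I⁺ᵢ(τ)`. -/
inductive PT (d : ℕ) : Type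
  | I : T d → PT d
  | Ip : Fin d → T d → PT d
deriving DecidableEq

/-- The cut map `C₊(τ̄, τ)`, returning a forest of planted trees, or `none`
(representing `0`).  This is the recursive definition of Table 1; the zero
conventions `I⁺ᵢ(X_j) = 0` for `j ≠ i`, `I⁺ᵢ(τ) = 0` for `τ ∉ Ñ` and the
projection `p₊` onto planted trees of positive order are built in. -/
noncomputable def Cplus {d : ℕ} (δ : ℝ) : T d → T d → Option (List (PT d))
  | T.one, T.one => some [PT.I T.one]
  | T.one, T.X j => some [PT.I (T.X j)]
  | T.one, T.prod x y z =>
      if 0 < T.order δ (T.prod x y z) + 2 then some [PT.I (T.prod x y z)] else none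
  | T.X i, T.X j => if i = j then some [PT.Ip i (T.X j)] else none
  | T.X i, T.prod x y z =>
      if T.inTildeN δ (T.prod x y z) then some [PT.Ip i (T.prod x y z)] else none
  | T.Xi, T.Xi => some []
  | T.prod a b c, T.prod x y z =>
      match Cplus δ a x, Cplus δ b y, Cplus δ c z with
      | some f1, some f2, some f3 => some (f1 ++ f2 ++ f3)
      | _, _, _ => none
  | _, _ => none

namespace PT
/-- Leaf counts extended to planted trees. -/
def mOne {d : ℕ} : PT d → ℕ
  | I τ => T.mOne τ
  | Ip _ τ => T.mOne τ

def mX {d : ℕ} : PT d → ℕ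
  | I τ => T.mX τ
  | Ip _ τ => T.mX τ

def mXi {d : ℕ} : PT d → ℕ
  | I τ => T.mXi τ
  | Ip _ τ => T.mXi τ
end PT

/-- Leaf counts extended to forests of planted trees, by summation. -/
def FmOne {d : ℕ} (f : List (PT d)) : ℕ := (f.map PT.mOne).sum
def FmX {d : ℕ} (f : List (PT d)) : ℕ := (f.map PT.mX).sum
def FmXi {d : ℕ} (f : List (PT d)) : ℕ := (f.map PT.mXi).sum

/-- The relation `τ̄ ≤ τ`: `τ` is obtained from `τ̄` by replacing each `𝟏`-leaf
by an arbitrary tree and each `X i`-leaf by an arbitrary tree other than `𝟏`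
or `X j` with `j ≠ i`. -/
inductive TreeLe {d : ℕ} : T d → T d → Prop
  | one (τ : T d) : TreeLe T.one τ
  | X (i : Fin d) (τ : T d) (h1 : τ ≠ T.one)
      (h2 : ∀ j : Fin d, j ≠ i → τ ≠ T.X j) : TreeLe (T.X i) τ
  | Xi : TreeLe T.Xi T.Xi
  | prod {a b c x y z : T d} :
      TreeLe a x → TreeLe b y → TreeLe c z →
      TreeLe (T.prod a b c) (T.prod x y z)

/-! `C₊(τ̄, τ)` can only be nonzero when `τ` has the shape of `τ̄` above the leaves of `τ̄`,
and the condition `C₊` imposes at each leaf of `τ̄` is at least as strong as the one in `τ̄ ≤ τ`. -/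

section Cplus

variable {d : ℕ} {δ : ℝ}

theorem treeLe_X_of_Cplus_ne_none {i : Fin d} {τ : T d}
    (h : Cplus δ (T.X i) τ ≠ none) : TreeLe (T.X i) τ := by
  cases τ with
  | X j =>
    obtain rfl : i = j := by
      by_contra hij
      simp [Cplus, hij] at h
    exact .X i _ nofun fun k hk hki => hk (T.X.inj hki).symm
  | prod x y z => exact .X i _ nofun fun _ _ => nofun
  | _ => simp [Cplus] at h

theorem eq_Xi_of_Cplus_Xi_ne_none {τ : T d} (h : Cplus δ T.Xi τ ≠ none) : τ = T.Xi := by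
  cases τ <;> simp_all [Cplus]

theorem exists_prod_of_Cplus_prod_ne_none {a b c τ : T d}
    (h : Cplus δ (T.prod a b c) τ ≠ none) : ∃ x y z, τ = T.prod x y z := by
  cases τ <;> simp_all [Cplus]

theorem Cplus_prod_prod_ne_none {a b c x y z : T d}
    (h : Cplus δ (T.prod a b c) (T.prod x y z) ≠ none) :
    Cplus δ a x ≠ none ∧ Cplus δ b y ≠ none ∧ Cplus δ c z ≠ none := by
  revert h
  simp only [Cplus]
  cases Cplus δ a x <;> cases Cplus δ b y <;> cases Cplus δ c z <;> simp

end Cplus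

/-- if `C₊(τ̄, τ) ≠ 0` then `τ̄ ≤ τ`. -/
theorem Cplus_ne_zero_imp_le (d : ℕ) (δ : ℝ) (τbar τ : T d)
    (h : Cplus δ τbar τ ≠ none) : TreeLe τbar τ := by
  induction τbar generalizing τ with
  | one => exact .one τ
  | X i => exact treeLe_X_of_Cplus_ne_none h
  | Xi => rw [eq_Xi_of_Cplus_Xi_ne_none h]; exact .Xi
  | prod a b c iha ihb ihc =>
    obtain ⟨x, y, z, rfl⟩ := exists_prod_of_Cplus_prod_ne_none h
    obtain ⟨hx, hy, hz⟩ := Cplus_prod_prod_ne_none h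
    exact .prod (iha x hx) (ihb y hy) (ihc z hz)
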